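/- arXiv:2105.05429 — 2 statements merged into one kernel-verified Lean document; each statement's English description precedes it below -/
import Mathlib

section
/- Let ω : [0,1] → [0,∞) be a Dini function and let κ ∈ (0,1), γ ∈ (0,1). Define ω̃(r) = Σ_{i=1}^∞ κ^{γ i} (ω(κ^{-i} r) if κ^{-i} r < 1, else ω(1)). Then ω̃ is also a Dini function; in particular ∫₀¹ ω̃(t)/t dt < ∞. -/
open MeasureTheory Set Filter

/-- If `ω` is a Dini function (monotone increasing on `[0,1]`, nonnegative, with
`∫₀¹ ω(t)/t dt < ∞`), `κ, γ ∈ (0,1)`, and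
`ωt(r) = Σ_{i=1}^∞ κ^{γ i} (ω(κ^{-i} r)` if `κ^{-i} r < 1`, else `ω(1))`,
then `ωt` is also a Dini function; in particular `∫₀¹ ωt(t)/t dt < ∞`. -/
theorem dini_modified_is_dini (ω : ℝ → ℝ) (κ γ : ℝ)
    (hκ : κ ∈ Ioo (0:ℝ) 1) (hγ : γ ∈ Ioo (0:ℝ) 1)
    (hmono : MonotoneOn ω (Icc 0 1))
    (hnonneg : ∀ t ∈ Icc (0:ℝ) 1, 0 ≤ ω t)
    (hdini : IntegrableOn (fun t => ω t / t) (Ioc 0 1) volume)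
    (ωt : ℝ → ℝ)
    (hωt : ∀ r, ωt r = ∑' i : ℕ,
      κ ^ (γ * (i + 1 : ℕ)) * (if r / κ ^ (i + 1 : ℕ) < 1 then ω (r / κ ^ (i + 1 : ℕ)) else ω 1)) :
    MonotoneOn ωt (Icc 0 1) ∧ (∀ t ∈ Icc (0:ℝ) 1, 0 ≤ ωt t) ∧
      IntegrableOn (fun t => ωt t / t) (Ioc 0 1) volume := by
  obtain ⟨hκ0, hκ1⟩ := hκ
  obtain ⟨hγ0, hγ1⟩ := hγ
  set a : ℝ := κ ^ γ with ha_def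
  have ha0 : 0 < a := Real.rpow_pos_of_pos hκ0 γ
  have ha1 : a < 1 := Real.rpow_lt_one hκ0.le hκ1 hγ0
  set gi : ℕ → ℝ → ℝ := fun i r => if r / κ ^ (i + 1) < 1 then ω (r / κ ^ (i + 1)) else ω 1
    with hgi_def
  have hc0 : ∀ i : ℕ, (0:ℝ) < κ ^ (i + 1) := fun i => pow_pos hκ0 _
  have hc1 : ∀ i : ℕ, κ ^ (i + 1) < 1 := fun i => pow_lt_one₀ hκ0.le hκ1 (Nat.succ_ne_zero i)
  have hpow : ∀ i : ℕ, κ ^ (γ * ((i + 1 : ℕ) : ℝ)) = a ^ (i + 1) := by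
    intro i
    rw [Real.rpow_mul hκ0.le, Real.rpow_natCast]
  have hωt_eq : ∀ r, ωt r = ∑' i : ℕ, a ^ (i + 1) * gi i r := by
    intro r
    rw [hωt r]
    congr 1
    funext i
    rw [hpow i]
  -- basic properties of gi
  have hgi_mono : ∀ i : ℕ, MonotoneOn (gi i) (Ici 0) := by
    intro i r hr s hs hrs
    have hcp := hc0 i
    by_cases hs' : s / κ ^ (i + 1) < 1
    · have hr' : r / κ ^ (i + 1) < 1 :=
        lt_of_le_of_lt (div_le_div_of_nonneg_right hrs hcp.le |>.trans_eq rfl) hs'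
      simp only [hgi_def, if_pos hs', if_pos hr']
      exact hmono ⟨div_nonneg hr hcp.le, hr'.le⟩ ⟨div_nonneg hs hcp.le, hs'.le⟩
        (div_le_div_of_nonneg_right hrs hcp.le)
    · simp only [hgi_def, if_neg hs']
      by_cases hr' : r / κ ^ (i + 1) < 1
      · rw [if_pos hr']
        exact hmono ⟨div_nonneg hr hcp.le, hr'.le⟩ (by norm_num) hr'.le
      · rw [if_neg hr']
  have hgi_nonneg : ∀ i : ℕ, ∀ r : ℝ, 0 ≤ r → 0 ≤ gi i r := by
    intro i r hr
    simp only [hgi_def]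
    split_ifs with h
    · exact hnonneg _ ⟨div_nonneg hr (hc0 i).le, h.le⟩
    · exact hnonneg 1 (by norm_num)
  have hgi_le : ∀ i : ℕ, ∀ r : ℝ, 0 ≤ r → gi i r ≤ ω 1 := by
    intro i r hr
    simp only [hgi_def]
    split_ifs with h
    · exact hmono ⟨div_nonneg hr (hc0 i).le, h.le⟩ (by norm_num) h.le
    · exact le_rfl
  have hω1 : 0 ≤ ω 1 := hnonneg 1 (by norm_num)
  -- summability
  have hgeom : Summable (fun i : ℕ => a ^ (i + 1)) := by
    exact ((summable_geometric_of_lt_one ha0.le ha1).mul_left a).congr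
      (fun i => by rw [← pow_succ'])
  have hsum : ∀ r : ℝ, 0 ≤ r → Summable (fun i : ℕ => a ^ (i + 1) * gi i r) := by
    intro r hr
    refine Summable.of_nonneg_of_le
      (fun i => mul_nonneg (pow_nonneg ha0.le _) (hgi_nonneg i r hr))
      (fun i => mul_le_mul_of_nonneg_left (hgi_le i r hr) (pow_nonneg ha0.le _))
      (hgeom.mul_right (ω 1))
  -- monotonicity and nonnegativity of ωt
  have hmono' : MonotoneOn ωt (Icc 0 1) := by
    intro r hr s hs hrs
    rw [hωt_eq r, hωt_eq s]
    exact Summable.tsum_le_tsum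
      (fun i => mul_le_mul_of_nonneg_left (hgi_mono i hr.1 hs.1 hrs) (pow_nonneg ha0.le _))
      (hsum r hr.1) (hsum s hs.1)
  have hnonneg' : ∀ t ∈ Icc (0:ℝ) 1, 0 ≤ ωt t := by
    intro t ht
    rw [hωt_eq t]
    exact tsum_nonneg fun i => mul_nonneg (pow_nonneg ha0.le _) (hgi_nonneg i t ht.1)
  -- the Dini integral data
  have hι : IntervalIntegrable (fun s => ω s / s) volume 0 1 := by
    rw [intervalIntegrable_iff_integrableOn_Ioc_of_le zero_le_one]; exact hdini
  set A : ℝ := ∫ t in Ioc (0:ℝ) 1, ω t / t with hA_def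
  have hA0 : 0 ≤ A := setIntegral_nonneg measurableSet_Ioc
    (fun t ht => div_nonneg (hnonneg t ⟨ht.1.le, ht.2⟩) ht.1.le)
  have hκinv : 1 < κ⁻¹ := by
    nlinarith [inv_pos.mpr hκ0, mul_inv_cancel₀ (ne_of_gt hκ0)]
  have hlogκ : 0 < Real.log κ⁻¹ := Real.log_pos hκinv
  -- per-index integrability and integral value
  have key : ∀ i : ℕ, IntegrableOn (fun t => gi i t / t) (Ioc 0 1) volume ∧
      (∫ t in Ioc (0:ℝ) 1, gi i t / t) = A + ω 1 * (((i:ℝ)+1) * Real.log κ⁻¹) := by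
    intro i
    set c : ℝ := κ ^ (i+1) with hc_def
    have hcp : 0 < c := hc0 i
    have hcl : c < 1 := hc1 i
    have heq1 : ∀ t ∈ Ioc (0:ℝ) c, gi i t / t = c⁻¹ * (ω (c⁻¹ * t) / (c⁻¹ * t)) := by
      intro t ht
      have htc : t / c ≤ 1 := (div_le_one hcp).2 ht.2
      simp only [← div_eq_inv_mul]
      rcases lt_or_eq_of_le htc with h | h
      · rw [show gi i t = ω (t / c) from if_pos h, div_div,
          div_mul_cancel₀ _ (ne_of_gt hcp)]
      · rw [show gi i t = ω 1 from if_neg (by rw [h]; exact lt_irrefl 1), h, div_one,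
          (div_eq_one_iff_eq (ne_of_gt hcp)).1 h]
    have heq2 : ∀ t ∈ Ioc c 1, gi i t / t = ω 1 / t := by
      intro t ht
      have : ¬ t / c < 1 := not_lt.2 (le_of_lt ((one_lt_div hcp).2 ht.1))
      rw [show gi i t = ω 1 from if_neg this]
    have I1 : IntegrableOn (fun t => c⁻¹ * (ω (c⁻¹ * t) / (c⁻¹ * t))) (Ioc 0 c) volume := by
      have h1 : IntervalIntegrable (fun x => ω (c⁻¹ * x) / (c⁻¹ * x)) volume 0 c := by
        have := hι.comp_mul_left (c := c⁻¹)
        simpa [inv_inv] using this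
      rw [← intervalIntegrable_iff_integrableOn_Ioc_of_le hcp.le]
      exact h1.const_mul c⁻¹
    have I1' : IntegrableOn (fun t => gi i t / t) (Ioc 0 c) volume :=
      I1.congr_fun (fun t ht => (heq1 t ht).symm) measurableSet_Ioc
    have I2base : IntegrableOn (fun t => ω 1 / t) (Ioc c 1) volume := by
      refine IntegrableOn.mono_set ?_ Ioc_subset_Icc_self
      apply ContinuousOn.integrableOn_Icc
      exact continuousOn_const.div continuousOn_id (fun t ht => (hcp.trans_le ht.1).ne')
    have I2 : IntegrableOn (fun t => gi i t / t) (Ioc c 1) volume :=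
      I2base.congr_fun (fun t ht => (heq2 t ht).symm) measurableSet_Ioc
    have hunion : Ioc (0:ℝ) 1 = Ioc 0 c ∪ Ioc c 1 :=
      (Ioc_union_Ioc_eq_Ioc hcp.le hcl.le).symm
    constructor
    · rw [hunion]
      exact I1'.union I2
    · rw [hunion, setIntegral_union (Ioc_disjoint_Ioc_of_le le_rfl) measurableSet_Ioc I1' I2]
      congr 1
      · rw [setIntegral_congr_fun measurableSet_Ioc heq1]
        rw [← intervalIntegral.integral_of_le hcp.le,
          intervalIntegral.integral_const_mul]
        have hcomp := intervalIntegral.integral_comp_mul_left (a := 0) (b := c)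
          (f := fun s => ω s / s) (inv_ne_zero (ne_of_gt hcp))
        simp only [mul_zero, inv_mul_cancel₀ (ne_of_gt hcp), inv_inv, smul_eq_mul] at hcomp
        rw [hcomp, ← mul_assoc, inv_mul_cancel₀ (ne_of_gt hcp), one_mul,
          intervalIntegral.integral_of_le zero_le_one]
      · rw [setIntegral_congr_fun measurableSet_Ioc heq2,
          ← intervalIntegral.integral_of_le hcl.le]
        have h0 : (0:ℝ) ∉ Set.uIcc c 1 := by
          rw [Set.uIcc_of_le hcl.le]
          intro h; exact absurd h.1 (not_le.2 hcp)
        simp only [div_eq_mul_inv]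
        rw [intervalIntegral.integral_const_mul, integral_inv h0, one_div]
        rw [hc_def, ← inv_pow, Real.log_pow]
        push_cast
        ring
  -- the bound sequence
  set b : ℕ → ℝ := fun i => a ^ (i+1) * (A + ω 1 * (((i:ℝ)+1) * Real.log κ⁻¹)) with hb_def
  have hb0 : ∀ i, 0 ≤ b i := fun i =>
    mul_nonneg (pow_nonneg ha0.le _)
      (add_nonneg hA0 (mul_nonneg hω1 (mul_nonneg (by positivity) hlogκ.le)))
  have hbsum : Summable b := by
    have h1 : Summable (fun i : ℕ => ((i:ℝ)+1) * a^(i+1)) := by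
      have h0 := summable_pow_mul_geometric_of_norm_lt_one 1
        (by rwa [Real.norm_eq_abs, abs_of_pos ha0] : ‖a‖ < 1)
      have h2 := (summable_nat_add_iff 1).2 h0
      refine h2.congr fun n => ?_
      push_cast
      ring
    refine ((hgeom.mul_left A).add (h1.mul_left (ω 1 * Real.log κ⁻¹))).congr fun i => ?_
    simp only [hb_def]
    ring
  -- integrability of each term and values
  have hFint : ∀ i : ℕ, Integrable (fun t => a^(i+1) * (gi i t / t))
      (volume.restrict (Ioc (0:ℝ) 1)) := fun i => ((key i).1).const_mul _
  have hFval : ∀ i : ℕ, (∫ t in Ioc (0:ℝ) 1, a^(i+1) * (gi i t / t)) = b i := by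
    intro i
    rw [integral_const_mul, (key i).2]
  -- measurability
  have hGimeas : ∀ i : ℕ, Measurable (fun t => gi i (max t 0)) := by
    intro i
    have hm : Monotone fun t => gi i (max t 0) := fun r s h =>
      hgi_mono i (le_max_right r 0) (le_max_right s 0) (max_le_max h le_rfl)
    exact hm.measurable
  have hFmeas : ∀ i : ℕ, AEMeasurable (fun t => ENNReal.ofReal (a^(i+1) * (gi i t / t)))
      (volume.restrict (Ioc (0:ℝ) 1)) := by
    intro i
    have hm : Measurable (fun t : ℝ => ENNReal.ofReal (a ^ (i+1) * (gi i (max t 0) / t))) :=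
      (((hGimeas i).div measurable_id).const_mul (a ^ (i+1))).ennreal_ofReal
    refine AEMeasurable.congr hm.aemeasurable ?_
    filter_upwards [ae_restrict_mem measurableSet_Ioc] with t ht
    rw [max_eq_left ht.1.le]
  have hWmono : Monotone fun t => ωt (max (min t 1) 0) := by
    intro r s h
    exact hmono' ⟨le_max_right _ _, max_le (min_le_right _ _) zero_le_one⟩
      ⟨le_max_right _ _, max_le (min_le_right _ _) zero_le_one⟩
      (max_le_max (min_le_min_right _ h) le_rfl)
  have hmeasf : AEStronglyMeasurable (fun t => ωt t / t) (volume.restrict (Ioc (0:ℝ) 1)) := by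
    refine ((hWmono.measurable.div measurable_id).aestronglyMeasurable).congr ?_
    filter_upwards [ae_restrict_mem measurableSet_Ioc] with t ht
    show ωt (max (min t 1) 0) / t = ωt t / t
    rw [min_eq_left ht.2, max_eq_left ht.1.le]
  -- pointwise identity
  have hptwise : ∀ t ∈ Ioc (0:ℝ) 1, ENNReal.ofReal (ωt t / t)
      = ∑' i : ℕ, ENNReal.ofReal (a^(i+1) * (gi i t / t)) := by
    intro t ht
    rw [hωt_eq t, ← tsum_div_const]
    rw [ENNReal.ofReal_tsum_of_nonneg]
    · congr 1
      funext i
      rw [mul_div_assoc]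
    · intro i
      exact div_nonneg (mul_nonneg (pow_nonneg ha0.le _) (hgi_nonneg i t ht.1.le)) ht.1.le
    · exact (hsum t ht.1.le).div_const t
  refine ⟨hmono', hnonneg', hmeasf, ?_⟩
  rw [hasFiniteIntegral_iff_ofReal ?pos]
  case pos =>
    filter_upwards [ae_restrict_mem measurableSet_Ioc] with t ht
    exact div_nonneg (hnonneg' t ⟨ht.1.le, ht.2⟩) ht.1.le
  calc ∫⁻ t in Ioc (0:ℝ) 1, ENNReal.ofReal (ωt t / t)
      = ∫⁻ t in Ioc (0:ℝ) 1, ∑' i : ℕ, ENNReal.ofReal (a^(i+1) * (gi i t / t)) := by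
        refine lintegral_congr_ae ?_
        filter_upwards [ae_restrict_mem measurableSet_Ioc] with t ht
        exact hptwise t ht
    _ = ∑' i : ℕ, ∫⁻ t in Ioc (0:ℝ) 1, ENNReal.ofReal (a^(i+1) * (gi i t / t)) :=
        lintegral_tsum hFmeas
    _ = ∑' i : ℕ, ENNReal.ofReal (b i) := by
        congr 1
        funext i
        rw [← ofReal_integral_eq_lintegral_ofReal (hFint i) ?_, hFval i]
        filter_upwards [ae_restrict_mem measurableSet_Ioc] with t ht
        exact mul_nonneg (pow_nonneg ha0.le _) (div_nonneg (hgi_nonneg i t ht.1.le) ht.1.le)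
    _ = ENNReal.ofReal (∑' i, b i) := (ENNReal.ofReal_tsum_of_nonneg hb0 hbsum).symm
    _ < ⊤ := ENNReal.ofReal_lt_top
end

section
/- Let ω : [0,1] → [0,∞) be a monotonically increasing function, κ ∈ (0,1), and γ ∈ (0,1). With ω̃(r) = Σ_{i=1}^∞ κ^{γ i}(ω(κ^{-i} r)·[κ^{-i} r < 1] + ω(1)·[κ^{-i} r ≥ 1]), one has for every positive integer j and r ∈ (0,1]: Σ_{i=1}^{j} κ^{γ(i-1)} ω(κ^{j-i} r) ≤ κ^{-γ} ω̃(κ^{j} r). -/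
open MeasureTheory Set Filter

/-- For a monotone increasing `ω : [0,1] → [0,∞)` extended by `ω(1)` for arguments `≥ 1`,
`κ, γ ∈ (0,1)`, and `ω̃(r) = Σ_{i=1}^∞ κ^{γ i}(ω(κ^{-i} r)·[κ^{-i} r < 1] + ω(1)·[κ^{-i} r ≥ 1])`,
one has, for every positive integer `j` and `r ∈ (0,1]`:
`Σ_{i=1}^{j} κ^{γ(i-1)} ω(κ^{j-i} r) ≤ κ^{-γ} ω̃(κ^{j} r)`. -/
theorem sum_le_modified_dini (ω : ℝ → ℝ) (κ γ : ℝ)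
    (hκ : κ ∈ Ioo (0:ℝ) 1) (hγ : γ ∈ Ioo (0:ℝ) 1)
    (hmono : MonotoneOn ω (Icc 0 1))
    (hnonneg : ∀ t ∈ Icc (0:ℝ) 1, 0 ≤ ω t)
    (hext : ∀ t : ℝ, 1 ≤ t → ω t = ω 1)
    (ωt : ℝ → ℝ)
    (hωt : ∀ r, ωt r = ∑' i : ℕ,
      κ ^ (γ * (i + 1 : ℕ)) * (if r / κ ^ (i + 1 : ℕ) < 1 then ω (r / κ ^ (i + 1 : ℕ)) else ω 1))
    (j : ℕ) (hj : 1 ≤ j) (r : ℝ) (hr : r ∈ Ioc (0:ℝ) 1) :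
    ∑ i ∈ Finset.range j, κ ^ (γ * (i : ℕ)) * ω (κ ^ (j - 1 - i) * r)
      ≤ κ ^ (-γ) * ωt (κ ^ j * r) := by
  obtain ⟨hκ0, hκ1⟩ := hκ
  obtain ⟨hγ0, hγ1⟩ := hγ
  obtain ⟨hr0, hr1⟩ := hr
  have hω1 : 0 ≤ ω 1 := hnonneg 1 (by norm_num)
  set s := κ ^ j * r with hs
  have hs0 : 0 < s := mul_pos (pow_pos hκ0 j) hr0
  set g : ℕ → ℝ := fun i =>
    κ ^ (γ * (i + 1 : ℕ)) * (if s / κ ^ (i + 1 : ℕ) < 1 then ω (s / κ ^ (i + 1 : ℕ)) else ω 1)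
    with hg
  -- basic facts about the if-expression
  have hif : ∀ i : ℕ, (0 ≤ (if s / κ ^ (i + 1 : ℕ) < 1 then ω (s / κ ^ (i + 1 : ℕ)) else ω 1)) ∧
      (if s / κ ^ (i + 1 : ℕ) < 1 then ω (s / κ ^ (i + 1 : ℕ)) else ω 1) ≤ ω 1 := by
    intro i
    have harg0 : 0 ≤ s / κ ^ (i + 1 : ℕ) := le_of_lt (div_pos hs0 (pow_pos hκ0 _))
    split_ifs with h
    · exact ⟨hnonneg _ ⟨harg0, h.le⟩, hmono ⟨harg0, h.le⟩ (by norm_num) h.le⟩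
    · exact ⟨hω1, le_refl _⟩
  have hgnn : ∀ i, 0 ≤ g i := fun i =>
    mul_nonneg (Real.rpow_nonneg hκ0.le _) (hif i).1
  have hκγ : (0:ℝ) < κ ^ γ := Real.rpow_pos_of_pos hκ0 γ
  have hκγ1 : κ ^ γ < 1 := Real.rpow_lt_one hκ0.le hκ1 hγ0
  have hle : ∀ i, g i ≤ (κ ^ γ) ^ (i + 1) * ω 1 := by
    intro i
    have h1 : κ ^ (γ * (i + 1 : ℕ)) = (κ ^ γ) ^ (i + 1) := by
      rw [← Real.rpow_natCast (κ ^ γ) (i + 1), ← Real.rpow_mul hκ0.le]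
    show κ ^ (γ * (i + 1 : ℕ)) * _ ≤ _
    rw [h1]
    exact mul_le_mul_of_nonneg_left (hif i).2 (pow_nonneg hκγ.le _)
  have hmaj : Summable (fun i : ℕ => (κ ^ γ) ^ (i + 1) * ω 1) :=
    Summable.mul_right _
      ((summable_geometric_of_lt_one hκγ.le hκγ1).comp_injective (add_left_injective 1))
  have hsummable : Summable g := Summable.of_nonneg_of_le hgnn hle hmaj
  have hps : ∑ i ∈ Finset.range j, g i ≤ ∑' i, g i :=
    Summable.sum_le_tsum _ (fun i _ => hgnn i) hsummable
  have hfinal : ∑ i ∈ Finset.range j, κ ^ (γ * (i : ℕ)) * ω (κ ^ (j - 1 - i) * r)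
      = κ ^ (-γ) * ∑ i ∈ Finset.range j, g i := by
    rw [Finset.mul_sum]
    apply Finset.sum_congr rfl
    intro i hi
    have hij : i < j := Finset.mem_range.mp hi
    have harg : s / κ ^ (i + 1 : ℕ) = κ ^ (j - 1 - i) * r := by
      have hκne : κ ^ (i + 1 : ℕ) ≠ 0 := (pow_pos hκ0 _).ne'
      have hjsplit : κ ^ j = κ ^ (j - 1 - i) * κ ^ (i + 1) := by
        rw [← pow_add]
        congr 1
        omega
      rw [hs, hjsplit]
      field_simp
    have harg1 : κ ^ (j - 1 - i) * r ≤ 1 :=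
      mul_le_one₀ (pow_le_one₀ hκ0.le hκ1.le) hr0.le hr1
    have hifeq : (if s / κ ^ (i + 1 : ℕ) < 1 then ω (s / κ ^ (i + 1 : ℕ)) else ω 1)
        = ω (κ ^ (j - 1 - i) * r) := by
      rw [harg]
      split_ifs with h
      · rfl
      · exact (hext _ (not_lt.mp h)).symm
    rw [hg]
    simp only
    rw [hifeq, ← mul_assoc, ← Real.rpow_add hκ0]
    congr 2
    push_cast
    ring
  rw [hfinal, hωt]
  exact mul_le_mul_of_nonneg_left hps (Real.rpow_nonneg hκ0.le _)
end
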